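/- (Reduction of the finite-type system for the second family, equation (3)(3.6.b)) Under the ruled hypothesis Q = −uP, u_y + u·u_x = 0, suppose there exist real constants λ₁, λ₂, λ₃ with Δx = λ₁·x, Δy = λ₂·y, Δf = λ₃·f on D. Then 4H/W = (λ₂ − λ₁)·xy − 2λ₃·f on D; equivalently, f satisfies the partial differential equation f_xx + f_yy = ½((λ₂ − λ₁)xy − 2λ₃ f)·(1 + (f_x + y/2)²(1 + u²))². -/

import Mathlib

noncomputable section

/-- Partial derivative with respect to the first (x) variable. -/
def pdx (f : ℝ × ℝ → ℝ) : ℝ × ℝ → ℝ := fun p => fderiv ℝ f p (1, 0)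

/-- Partial derivative with respect to the second (y) variable. -/
def pdy (f : ℝ × ℝ → ℝ) : ℝ × ℝ → ℝ := fun p => fderiv ℝ f p (0, 1)

/-- `P = f_x + y/2`. -/
def Pf (f : ℝ × ℝ → ℝ) : ℝ × ℝ → ℝ := fun p => pdx f p + p.2 / 2

/-- `Q = f_y - x/2`. -/
def Qf (f : ℝ × ℝ → ℝ) : ℝ × ℝ → ℝ := fun p => pdy f p - p.1 / 2

/-- First fundamental form coefficient `E = 1 + P²`. -/
def Ef (f : ℝ × ℝ → ℝ) : ℝ × ℝ → ℝ := fun p => 1 + Pf f p ^ 2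

/-- First fundamental form coefficient `F = P·Q`. -/
def Ff (f : ℝ × ℝ → ℝ) : ℝ × ℝ → ℝ := fun p => Pf f p * Qf f p

/-- First fundamental form coefficient `G = 1 + Q²`. -/
def Gf (f : ℝ × ℝ → ℝ) : ℝ × ℝ → ℝ := fun p => 1 + Qf f p ^ 2

/-- `W = √(EG − F²) = √(1 + P² + Q²)`. -/
def Wf (f : ℝ × ℝ → ℝ) : ℝ × ℝ → ℝ := fun p => Real.sqrt (1 + Pf f p ^ 2 + Qf f p ^ 2)

/-- Second fundamental form coefficient `L = (f_xx + PQ)/W`. -/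
def Lf (f : ℝ × ℝ → ℝ) : ℝ × ℝ → ℝ := fun p => (pdx (pdx f) p + Pf f p * Qf f p) / Wf f p

/-- Second fundamental form coefficient `M = (f_xy + (Q² − P²)/2)/W`. -/
def Mf (f : ℝ × ℝ → ℝ) : ℝ × ℝ → ℝ :=
  fun p => (pdx (pdy f) p + (Qf f p ^ 2 - Pf f p ^ 2) / 2) / Wf f p

/-- Second fundamental form coefficient `N = (f_yy − PQ)/W`. -/
def Nf (f : ℝ × ℝ → ℝ) : ℝ × ℝ → ℝ := fun p => (pdy (pdy f) p - Pf f p * Qf f p) / Wf f p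

/-- Mean curvature `H = (EN − 2FM + GL)/(2W²)`. -/
def Hf (f : ℝ × ℝ → ℝ) : ℝ × ℝ → ℝ :=
  fun p => (Ef f p * Nf f p - 2 * Ff f p * Mf f p + Gf f p * Lf f p) / (2 * Wf f p ^ 2)

/-- The Laplace–Beltrami operator of the graph of `f`, with the sign convention
`Δφ = −(1/W)[∂_x((G φ_x − F φ_y)/W) + ∂_y((−F φ_x + E φ_y)/W)]`. -/
def lapS (f φ : ℝ × ℝ → ℝ) : ℝ × ℝ → ℝ := fun p =>
  -(1 / Wf f p) *
    (pdx (fun q => (Gf f q * pdx φ q - Ff f q * pdy φ q) / Wf f q) p +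
     pdy (fun q => (-(Ff f q) * pdx φ q + Ef f q * pdy φ q) / Wf f q) p)

/-- Mean curvature in the form `H = (f_xx + f_yy)/(2W³)`. -/
def Hm (f : ℝ × ℝ → ℝ) : ℝ × ℝ → ℝ :=
  fun p => (pdx (pdx f) p + pdy (pdy f) p) / (2 * Wf f p ^ 3)

/-- `H₁ = (f_xx + f_yy)/W`. -/
def H1f (f : ℝ × ℝ → ℝ) : ℝ × ℝ → ℝ :=
  fun p => (pdx (pdx f) p + pdy (pdy f) p) / Wf f p

/-! The matrix `A = [[G, -F], [-F, E]]` of the Laplacian fixes `(P, Q)`, and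
`∇f = (P - y/2, Q + x/2)`; hence the flux `A∇f/W` of `f` is
`(P, Q)/W + (x/2)·A∇y/W - (y/2)·A∇x/W`, and taking divergences gives
`xΔy - yΔx - 2Δf = (2/W)·div((P, Q)/W)`. Moreover
`W³·div((P, Q)/W) = (1 + Q²)P_x + (1 + P²)Q_y - PQ(P_y + Q_x)`, and for a ruling `Q = -uP` this
equals `P_x + Q_y - P³(u_y + u·u_x) = f_xx + f_yy` by Burgers' equation. So
`xΔy - yΔx - 2Δf = 4H/W`, and the eigenvalue equations give the claim. -/

open Filter Topology

theorem ContDiffAt.differentiableAt_fderiv_apply {E F : Type*} [NormedAddCommGroup E]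
    [NormedSpace ℝ E] [NormedAddCommGroup F] [NormedSpace ℝ F] {f : E → F} {x : E}
    (hf : ContDiffAt ℝ 2 f x) (v : E) : DifferentiableAt ℝ (fun y => fderiv ℝ f y v) x :=
  ((hf.fderiv_right (m := 1) (by norm_num)).differentiableAt one_ne_zero).clm_apply
    (differentiableAt_const v)

section Calculus

variable {E : Type*} [NormedAddCommGroup E] [NormedSpace ℝ E] {g d : E → ℝ} {x v : E}

theorem fderiv_div_apply (hg : DifferentiableAt ℝ g x) (hd : DifferentiableAt ℝ d x)
    (hx : d x ≠ 0) :
    fderiv ℝ (fun y => g y / d y) x v = (fderiv ℝ g x v * d x - g x * fderiv ℝ d x v) / d x ^ 2 := by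
  have hinv : HasFDerivAt (fun y => (d y)⁻¹) (-(d x ^ 2)⁻¹ • fderiv ℝ d x) x := by
    simpa [Function.comp_def] using (hasDerivAt_inv hx).comp_hasFDerivAt x hd.hasFDerivAt
  simp only [div_eq_mul_inv]
  rw [fderiv_fun_mul hg hinv.differentiableAt, hinv.fderiv]
  simp only [add_apply, smul_apply, smul_eq_mul]
  field_simp
  ring

theorem fderiv_div_sqrt_apply (hg : DifferentiableAt ℝ g x) (hd : DifferentiableAt ℝ d x)
    (hx : 0 < d x) :
    fderiv ℝ (fun y => g y / √(d y)) x v =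
      (fderiv ℝ g x v * d x - g x * fderiv ℝ d x v / 2) / √(d x) ^ 3 := by
  rw [fderiv_div_apply hg (hd.sqrt hx.ne') (Real.sqrt_pos.2 hx).ne', fderiv_sqrt hd hx.ne']
  have hs := Real.sq_sqrt hx.le
  simp only [smul_apply, smul_eq_mul]
  field_simp
  rw [hs]
  ring

end Calculus

section PartialDerivatives

variable {P Q u : ℝ × ℝ → ℝ} {p : ℝ × ℝ}

theorem pdx_div_sqrt_add_pdy_div_sqrt (hP : DifferentiableAt ℝ P p)
    (hQ : DifferentiableAt ℝ Q p) :
    pdx (fun q => P q / √(1 + P q ^ 2 + Q q ^ 2)) p +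
        pdy (fun q => Q q / √(1 + P q ^ 2 + Q q ^ 2)) p =
      ((1 + Q p ^ 2) * pdx P p + (1 + P p ^ 2) * pdy Q p - P p * Q p * (pdy P p + pdx Q p)) /
        √(1 + P p ^ 2 + Q p ^ 2) ^ 3 := by
  have hS : DifferentiableAt ℝ (fun q => 1 + P q ^ 2 + Q q ^ 2) p := by fun_prop
  have hSpos : 0 < 1 + P p ^ 2 + Q p ^ 2 := by positivity
  have hS' : ∀ v, fderiv ℝ (fun q => 1 + P q ^ 2 + Q q ^ 2) p v =
      2 * P p * fderiv ℝ P p v + 2 * Q p * fderiv ℝ Q p v := by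
    intro v
    rw [fderiv_fun_add (by fun_prop) (by fun_prop), fderiv_const_add, fderiv_fun_pow 2 hP,
      fderiv_fun_pow 2 hQ]
    simp only [add_apply, smul_apply, smul_eq_mul]
    ring
  simp only [pdx, pdy, fderiv_div_sqrt_apply hP hS hSpos, fderiv_div_sqrt_apply hQ hS hSpos, hS']
  field_simp
  ring

theorem mean_curvature_numerator_of_ruled (hQ : Q =ᶠ[𝓝 p] fun q => -(u q) * P q)
    (hu : DifferentiableAt ℝ u p) (hP : DifferentiableAt ℝ P p) :
    (1 + Q p ^ 2) * pdx P p + (1 + P p ^ 2) * pdy Q p - P p * Q p * (pdy P p + pdx Q p) =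
      pdx P p + pdy Q p - P p ^ 3 * (pdy u p + u p * pdx u p) := by
  have hQ' : ∀ v, fderiv ℝ Q p v = -(u p * fderiv ℝ P p v + P p * fderiv ℝ u p v) := by
    intro v
    rw [hQ.fderiv_eq, fderiv_fun_mul (by fun_prop : DifferentiableAt ℝ (fun q => -u q) p) hP,
      fderiv_fun_neg]
    simp only [add_apply, smul_apply, smul_eq_mul, neg_apply]
    ring
  simp only [pdx, pdy, hQ', hQ.eq_of_nhds]
  ring

theorem fderiv_add_coord_mul_apply {a b c : ℝ × ℝ → ℝ} {v : ℝ × ℝ}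
    (hc : DifferentiableAt ℝ c p) (ha : DifferentiableAt ℝ a p) (hb : DifferentiableAt ℝ b p) :
    fderiv ℝ (fun q => c q + (q.1 * a q - q.2 * b q) / 2) p v =
      fderiv ℝ c p v +
        (v.1 * a p + p.1 * fderiv ℝ a p v - (v.2 * b p + p.2 * fderiv ℝ b p v)) / 2 := by
  have h := hc.hasFDerivAt.fun_add
    (((hasFDerivAt_fst.fun_mul ha.hasFDerivAt).fun_sub
      (hasFDerivAt_snd.fun_mul hb.hasFDerivAt)).mul_const (2 : ℝ)⁻¹)
  simp only [div_eq_mul_inv]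
  rw [h.fderiv]
  simp only [add_apply, smul_apply, sub_apply, smul_eq_mul, ContinuousLinearMap.coe_fst',
    ContinuousLinearMap.coe_snd', add_right_inj]
  ring

end PartialDerivatives

section Graph

variable {f u : ℝ × ℝ → ℝ} {p : ℝ × ℝ}

theorem Wf_pos : 0 < Wf f p := Real.sqrt_pos.2 (by positivity)

theorem lapS_fst : lapS f (fun q => q.1) p =
    -(1 / Wf f p) * (pdx (fun q => Gf f q / Wf f q) p + pdy (fun q => -Ff f q / Wf f q) p) := by
  simp [lapS, pdx, pdy, fderiv_fst]

theorem lapS_snd : lapS f (fun q => q.2) p =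
    -(1 / Wf f p) * (pdx (fun q => -Ff f q / Wf f q) p + pdy (fun q => Ef f q / Wf f q) p) := by
  simp [lapS, pdx, pdy, fderiv_snd]

theorem lapS_self (hP : DifferentiableAt ℝ (Pf f) p) (hQ : DifferentiableAt ℝ (Qf f) p) :
    lapS f f p = p.1 / 2 * lapS f (fun q => q.2) p - p.2 / 2 * lapS f (fun q => q.1) p
      - (pdx (fun q => Pf f q / Wf f q) p + pdy (fun q => Qf f q / Wf f q) p) / Wf f p := by
  have hWd : DifferentiableAt ℝ (Wf f) p :=
    (by fun_prop : DifferentiableAt ℝ (fun q => 1 + Pf f q ^ 2 + Qf f q ^ 2) p).sqrt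
      (by positivity)
  have hdiv : ∀ {g}, DifferentiableAt ℝ g p → DifferentiableAt ℝ (fun q => g q / Wf f q) p :=
    fun hg => by fun_prop (disch := exact Wf_pos.ne')
  have hPW := hdiv hP
  have hQW := hdiv hQ
  have hEW : DifferentiableAt ℝ (fun q => Ef f q / Wf f q) p := hdiv (by unfold Ef; fun_prop)
  have hFW : DifferentiableAt ℝ (fun q => -Ff f q / Wf f q) p := hdiv (by unfold Ff; fun_prop)
  have hGW : DifferentiableAt ℝ (fun q => Gf f q / Wf f q) p := hdiv (by unfold Gf; fun_prop)
  have h₁ : (fun q => (Gf f q * pdx f q - Ff f q * pdy f q) / Wf f q) =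
      fun q => Pf f q / Wf f q + (q.1 * (-Ff f q / Wf f q) - q.2 * (Gf f q / Wf f q)) / 2 := by
    funext q
    simp only [Gf, Ff, Pf, Qf]
    field_simp
    ring
  have h₂ : (fun q => (-Ff f q * pdx f q + Ef f q * pdy f q) / Wf f q) =
      fun q => Qf f q / Wf f q + (q.1 * (Ef f q / Wf f q) - q.2 * (-Ff f q / Wf f q)) / 2 := by
    funext q
    simp only [Ef, Ff, Pf, Qf]
    field_simp
    ring
  rw [lapS, h₁, h₂, lapS_fst, lapS_snd]
  simp only [pdx, pdy]
  rw [fderiv_add_coord_mul_apply hPW hFW hGW, fderiv_add_coord_mul_apply hQW hEW hFW]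
  field_simp
  ring

theorem pdx_Pf (hf : DifferentiableAt ℝ (pdx f) p) : pdx (Pf f) p = pdx (pdx f) p := by
  change fderiv ℝ (fun q => pdx f q + q.2 / 2) p (1, 0) = _
  rw [fderiv_fun_add hf (by fun_prop)]
  simp [div_eq_mul_inv, fderiv_mul_const, fderiv_snd, pdx]

theorem pdy_Qf (hf : DifferentiableAt ℝ (pdy f) p) : pdy (Qf f) p = pdy (pdy f) p := by
  change fderiv ℝ (fun q => pdy f q - q.1 / 2) p (0, 1) = _
  rw [fderiv_fun_sub hf (by fun_prop)]
  simp [div_eq_mul_inv, fderiv_mul_const, fderiv_fst, pdy]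

theorem Wf_sq_of_ruled (h : Qf f p = -(u p) * Pf f p) :
    Wf f p ^ 2 = 1 + (pdx f p + p.2 / 2) ^ 2 * (1 + u p ^ 2) := by
  rw [Wf, Real.sq_sqrt (by positivity), h, Pf]
  ring

theorem four_mul_Hm_div_Wf_eq_of_ruled (hf : ContDiffAt ℝ 2 f p)
    (hu : DifferentiableAt ℝ u p) (hruled : Qf f =ᶠ[𝓝 p] fun q => -(u q) * Pf f q)
    (hburgers : pdy u p + u p * pdx u p = 0) :
    4 * Hm f p / Wf f p =
      p.1 * lapS f (fun q => q.2) p - p.2 * lapS f (fun q => q.1) p - 2 * lapS f f p := by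
  have hfx : DifferentiableAt ℝ (pdx f) p := hf.differentiableAt_fderiv_apply (1, 0)
  have hfy : DifferentiableAt ℝ (pdy f) p := hf.differentiableAt_fderiv_apply (0, 1)
  have hP : DifferentiableAt ℝ (Pf f) p := hfx.add (by fun_prop)
  have hQ : DifferentiableAt ℝ (Qf f) p := hfy.sub (by fun_prop)
  have hdiv : pdx (fun q => Pf f q / Wf f q) p + pdy (fun q => Qf f q / Wf f q) p =
      ((1 + Qf f p ^ 2) * pdx (Pf f) p + (1 + Pf f p ^ 2) * pdy (Qf f) p -
        Pf f p * Qf f p * (pdy (Pf f) p + pdx (Qf f) p)) / Wf f p ^ 3 :=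
    pdx_div_sqrt_add_pdy_div_sqrt hP hQ
  rw [mean_curvature_numerator_of_ruled hruled hu hP, hburgers, pdx_Pf hfx, pdy_Qf hfy] at hdiv
  rw [lapS_self hP hQ, hdiv, Hm]
  field_simp
  ring

end Graph

theorem finite_type_S2_reduction_general
    (D : Set (ℝ × ℝ)) (hD : IsOpen D)
    (f : ℝ × ℝ → ℝ) (hf : ContDiffOn ℝ (⊤ : ℕ∞) f D)
    (u : ℝ × ℝ → ℝ) (hu : ContDiffOn ℝ (⊤ : ℕ∞) u D)
    (hruled : ∀ p ∈ D, Qf f p = -(u p) * Pf f p)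
    (hburgers : ∀ p ∈ D, pdy u p + u p * pdx u p = 0)
    (l1 l2 l3 : ℝ)
    (h1 : ∀ p ∈ D, lapS f (fun q => q.1) p = l1 * p.1)
    (h2 : ∀ p ∈ D, lapS f (fun q => q.2) p = l2 * p.2)
    (h3 : ∀ p ∈ D, lapS f f p = l3 * f p) :
    ∀ p ∈ D,
      (4 * Hm f p / Wf f p = (l2 - l1) * (p.1 * p.2) - 2 * l3 * f p) ∧
      (pdx (pdx f) p + pdy (pdy f) p =
        (1 / 2) * ((l2 - l1) * (p.1 * p.2) - 2 * l3 * f p) *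
          (1 + (pdx f p + p.2 / 2) ^ 2 * (1 + u p ^ 2)) ^ 2) := by
  intro p hp
  have hD_nhds : D ∈ 𝓝 p := hD.mem_nhds hp
  have hf2 : ContDiffAt ℝ 2 f p := (hf.contDiffAt hD_nhds).of_le (by norm_cast)
  have hu1 : DifferentiableAt ℝ u p := (hu.contDiffAt hD_nhds).differentiableAt (by simp)
  have key := four_mul_Hm_div_Wf_eq_of_ruled hf2 hu1 (eventually_of_mem hD_nhds hruled)
    (hburgers p hp)
  rw [h1 p hp, h2 p hp, h3 p hp] at key
  have hH : 4 * Hm f p / Wf f p = (l2 - l1) * (p.1 * p.2) - 2 * l3 * f p := by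
    rw [key]
    ring
  refine ⟨hH, ?_⟩
  rw [← hH, ← Wf_sq_of_ruled (hruled p hp), Hm]
  field_simp [Wf_pos.ne']
  ring

/-- **Reduction of the finite-type system for the second family** (equation (3) of (3.6.b)):
under the ruled hypothesis `Q = −uP`, `u_y + u·u_x = 0`, if `Δx = λ₁x`, `Δy = λ₂y`, `Δf = λ₃f`
on `D`, then `4H/W = (λ₂ − λ₁)xy − 2λ₃f` on `D`; equivalently
`f_xx + f_yy = ½((λ₂ − λ₁)xy − 2λ₃f)(1 + (f_x + y/2)²(1 + u²))²`. -/
theorem finite_type_S2_reduction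
    (D : Set (ℝ × ℝ)) (hD : IsOpen D) (hDne : D.Nonempty)
    (f : ℝ × ℝ → ℝ) (hf : ContDiffOn ℝ (⊤ : ℕ∞) f D)
    (u : ℝ × ℝ → ℝ) (hu : ContDiffOn ℝ (⊤ : ℕ∞) u D)
    (hruled : ∀ p ∈ D, Qf f p = -(u p) * Pf f p)
    (hburgers : ∀ p ∈ D, pdy u p + u p * pdx u p = 0)
    (l1 l2 l3 : ℝ)
    (h1 : ∀ p ∈ D, lapS f (fun q => q.1) p = l1 * p.1)
    (h2 : ∀ p ∈ D, lapS f (fun q => q.2) p = l2 * p.2)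
    (h3 : ∀ p ∈ D, lapS f f p = l3 * f p) :
    ∀ p ∈ D,
      (4 * Hm f p / Wf f p = (l2 - l1) * (p.1 * p.2) - 2 * l3 * f p) ∧
      (pdx (pdx f) p + pdy (pdy f) p =
        (1 / 2) * ((l2 - l1) * (p.1 * p.2) - 2 * l3 * f p) *
          (1 + (pdx f p + p.2 / 2) ^ 2 * (1 + u p ^ 2)) ^ 2) :=
  finite_type_S2_reduction_general D hD f hf u hu hruled hburgers l1 l2 l3 h1 h2 h3
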